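/- arXiv:2009.02275 — 6 statements merged into one kernel-verified Lean document; each statement's English description precedes it below -/
import Mathlib

section
/- Let $q_F(\beta) = \alpha_F(w\beta/(\beta + b(1-\beta)) + \epsilon)$ and $q_R(\beta) = \alpha_R(w\beta/(\beta + b(1-\beta)) + \epsilon)$ for $\beta \in [0,1]$, with $\alpha_F, \alpha_R, \epsilon, b, w > 0$ and $\max\{\alpha_F, \alpha_R\}(w+\epsilon) < 1$. Then the fixed-point equation $\beta = \beta q_F(\beta) + (1-\beta) q_R(\beta)$ has a unique solution in $(0,1)$. -/
open Set

/-
Since `β + b(1 - β) > 0` on `(0, 1)`, clearing this denominator turns the fixed-point equation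
into `Aβ² + Bβ + C = 0` with `C = -α_R ε b < 0` and `A + B + C = 1 - α_F (w + ε) > 0`.
The intermediate value theorem gives a root in `(0, 1)`. If there were two, `x` and `y`, then
`C = Axy` and `A + B + C = A(1 - x)(1 - y)` by Vieta, so `C (A + B + C) ≥ 0`, a contradiction.
-/

section Quadratic

variable {A B C : ℝ}

theorem eq_of_quadratic_eq_zero_of_mem_Ioo (hC : C * (A + B + C) < 0) {x y : ℝ}
    (hx : x ∈ Ioo (0 : ℝ) 1) (hy : y ∈ Ioo (0 : ℝ) 1)
    (hfx : A * x ^ 2 + B * x + C = 0) (hfy : A * y ^ 2 + B * y + C = 0) : x = y := by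
  by_contra hne
  have hsum : A * (x + y) + B = 0 := by
    have : (x - y) * (A * (x + y) + B) = 0 := by linear_combination hfx - hfy
    exact (mul_eq_zero.mp this).resolve_left (sub_ne_zero.mpr hne)
  have hprod : C = A * (x * y) := by linear_combination hfx - x * hsum
  have hone : A + B + C = A * ((1 - x) * (1 - y)) := by linear_combination hprod + hsum
  have : 0 ≤ C * (A + B + C) := by
    rw [hone, hprod]
    have := mul_pos (mul_pos hx.1 hy.1) (mul_pos (sub_pos.mpr hx.2) (sub_pos.mpr hy.2))
    nlinarith [sq_nonneg A]
  linarith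

theorem existsUnique_quadratic_eq_zero_mem_Ioo (hC : C < 0) (hABC : 0 < A + B + C) :
    ∃! x : ℝ, x ∈ Ioo (0 : ℝ) 1 ∧ A * x ^ 2 + B * x + C = 0 := by
  have hcont : ContinuousOn (fun x : ℝ => A * x ^ 2 + B * x + C) (Icc 0 1) := by fun_prop
  obtain ⟨x, hx, hfx⟩ := intermediate_value_Ioo zero_le_one hcont
    (show (0 : ℝ) ∈ Ioo (A * 0 ^ 2 + B * 0 + C) (A * 1 ^ 2 + B * 1 + C) from
      ⟨by simpa using hC, by simpa using hABC⟩)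
  exact ⟨x, ⟨hx, hfx⟩, fun y hy =>
    eq_of_quadratic_eq_zero_of_mem_Ioo (mul_neg_of_neg_of_pos hC hABC) hy.1 hx hy.2 hfx⟩

end Quadratic

theorem fixedPoint_iff_quadratic_eq_zero {αF αR w b ε β : ℝ} (hD : β + b * (1 - β) ≠ 0) :
    β = β * (αF * (w * β / (β + b * (1 - β)) + ε))
        + (1 - β) * (αR * (w * β / (β + b * (1 - β)) + ε))
      ↔ ((1 - b) - (αF - αR) * (w + ε * (1 - b))) * β ^ 2
          + (b - αR * (w + ε * (1 - b)) - (αF - αR) * (ε * b)) * β + -(αR * ε * b) = 0 := by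
  have hcleared : (β + b * (1 - β)) * (β - (β * (αF * (w * β / (β + b * (1 - β)) + ε))
      + (1 - β) * (αR * (w * β / (β + b * (1 - β)) + ε))))
      = ((1 - b) - (αF - αR) * (w + ε * (1 - b))) * β ^ 2
          + (b - αR * (w + ε * (1 - b)) - (αF - αR) * (ε * b)) * β + -(αR * ε * b) := by
    field_simp
    ring
  rw [← sub_eq_zero, ← mul_eq_zero_iff_left hD, hcleared]

theorem stmt_0_general (αF αR w b ε : ℝ)
    (hαR : 0 < αR) (hw : 0 < w) (hb : 0 < b) (hε : 0 < ε)
    (hmax : max αF αR * (w + ε) < 1)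
    (qF qR : ℝ → ℝ)
    (hqF : ∀ β, qF β = αF * (w * β / (β + b * (1 - β)) + ε))
    (hqR : ∀ β, qR β = αR * (w * β / (β + b * (1 - β)) + ε)) :
    ∃! β : ℝ, β ∈ Set.Ioo (0:ℝ) 1 ∧ β = β * qF β + (1 - β) * qR β := by
  have hC : -(αR * ε * b) < 0 := neg_neg_of_pos (by positivity)
  have hABC : 0 < ((1 - b) - (αF - αR) * (w + ε * (1 - b)))
      + (b - αR * (w + ε * (1 - b)) - (αF - αR) * (ε * b)) + -(αR * ε * b) := by
    have : αF * (w + ε) ≤ max αF αR * (w + ε) := by gcongr; exact le_max_left _ _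
    linarith
  refine (existsUnique_congr fun β => and_congr_right fun hβ => ?_).mpr
    (existsUnique_quadratic_eq_zero_mem_Ioo hC hABC)
  have hD : β + b * (1 - β) ≠ 0 := by
    have := mul_pos hb (sub_pos.mpr hβ.2)
    linarith [hβ.1]
  rw [hqF, hqR]
  exact fixedPoint_iff_quadratic_eq_zero hD

theorem stmt_0 (αF αR w b ε : ℝ)
    (hαF : 0 < αF) (hαR : 0 < αR) (hw : 0 < w) (hb : 0 < b) (hε : 0 < ε)
    (hmax : max αF αR * (w + ε) < 1)
    (qF qR : ℝ → ℝ)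
    (hqF : ∀ β, qF β = αF * (w * β / (β + b * (1 - β)) + ε))
    (hqR : ∀ β, qR β = αR * (w * β / (β + b * (1 - β)) + ε)) :
    ∃! β : ℝ, β ∈ Set.Ioo (0:ℝ) 1 ∧ β = β * qF β + (1 - β) * qR β :=
  stmt_0_general αF αR w b ε hαR hw hb hε hmax qF qR hqF hqR
end

section
/- Let $g(\beta) = \beta(q_F(\beta) - q_R(\beta) - 1) + q_R(\beta)$ with $q_i(\beta) = \alpha_i(w\beta/(\beta + b(1-\beta)) + \epsilon)$. The second derivative of $g$ satisfies $g''(\beta) = \frac{2wb}{(\beta + b(1-\beta))^3}(b\alpha_F - \alpha_R)$ for all $\beta \in [0,1]$. Consequently, $g$ is strictly convex on $[0,1]$ if $b\alpha_F > \alpha_R$, strictly concave if $b\alpha_F < \alpha_R$, and affine if $b\alpha_F = \alpha_R$. -/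
theorem stmt_2 (αF αR w b ε : ℝ)
    (hαF : 0 < αF) (hαR : 0 < αR) (hw : 0 < w) (hb : 0 < b) (hε : 0 < ε)
    (qF qR g : ℝ → ℝ)
    (hqF : ∀ β, qF β = αF * (w * β / (β + b * (1 - β)) + ε))
    (hqR : ∀ β, qR β = αR * (w * β / (β + b * (1 - β)) + ε))
    (hg : ∀ β, g β = β * (qF β - qR β - 1) + qR β) :
    (∀ β ∈ Set.Icc (0:ℝ) 1,
      deriv (deriv g) β = 2 * w * b / (β + b * (1 - β)) ^ 3 * (b * αF - αR))
    ∧ (b * αF > αR → StrictConvexOn ℝ (Set.Icc (0:ℝ) 1) g)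
    ∧ (b * αF < αR → StrictConcaveOn ℝ (Set.Icc (0:ℝ) 1) g)
    ∧ (b * αF = αR → ∃ a c : ℝ, ∀ β ∈ Set.Icc (0:ℝ) 1, g β = a * β + c) := by
  have hgfun : g = fun β : ℝ =>
      β * ((αF - αR) * (w * β / (β + b * (1 - β)) + ε) - 1)
        + αR * (w * β / (β + b * (1 - β)) + ε) := by
    funext β; rw [hg, hqF, hqR]; ring
  set G1 : ℝ → ℝ := fun β =>
    (αF - αR) * (w * β / (β + b * (1 - β)) + ε) - 1
      + (β * (αF - αR) + αR) * (w * b / (β + b * (1 - β)) ^ 2) with hG1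
  -- derivative of the denominator
  have hD : ∀ β : ℝ, HasDerivAt (fun x : ℝ => x + b * (1 - x)) (1 - b) β := by
    intro β
    have : HasDerivAt (fun x : ℝ => x + b * (1 - x)) (1 + b * (0 - 1)) β :=
      (hasDerivAt_id β).add (((hasDerivAt_const β (1:ℝ)).sub (hasDerivAt_id β)).const_mul b)
    simpa using this.congr_deriv (by ring)
  have hH : ∀ β : ℝ, β + b * (1 - β) ≠ 0 →
      HasDerivAt (fun x : ℝ => w * x / (x + b * (1 - x)) + ε)
        ((w * (β + b * (1 - β)) - w * β * (1 - b)) / (β + b * (1 - β)) ^ 2) β := by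
    intro β hne
    exact ((((hasDerivAt_id β).const_mul w).div (hD β) hne).add_const ε).congr_deriv
      (by simp only [id_eq]; ring)
  -- first derivative of g
  have hderiv1 : ∀ β : ℝ, β + b * (1 - β) ≠ 0 → HasDerivAt g (G1 β) β := by
    intro β hne
    rw [hgfun]
    have h1 : HasDerivAt (fun x : ℝ =>
        x * ((αF - αR) * (w * x / (x + b * (1 - x)) + ε) - 1)
          + αR * (w * x / (x + b * (1 - x)) + ε))
        (1 * ((αF - αR) * (w * β / (β + b * (1 - β)) + ε) - 1)
          + β * ((αF - αR) * ((w * (β + b * (1 - β)) - w * β * (1 - b)) / (β + b * (1 - β)) ^ 2))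
          + αR * ((w * (β + b * (1 - β)) - w * β * (1 - b)) / (β + b * (1 - β)) ^ 2)) β := by
      exact ((hasDerivAt_id β).mul (((hH β hne).const_mul (αF - αR)).sub_const 1)).add
        ((hH β hne).const_mul αR)
    refine h1.congr_deriv ?_
    rw [hG1]
    field_simp
    ring
  -- second derivative formula
  have hderiv2 : ∀ β : ℝ, β + b * (1 - β) ≠ 0 →
      HasDerivAt G1 (2 * w * b / (β + b * (1 - β)) ^ 3 * (b * αF - αR)) β := by
    intro β hne
    have hpow : HasDerivAt (fun x : ℝ => (x + b * (1 - x)) ^ 2)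
        (2 * (β + b * (1 - β)) ^ 1 * (1 - b)) β := (hD β).pow 2
    have hne2 : (β + b * (1 - β)) ^ 2 ≠ 0 := pow_ne_zero _ hne
    have hfrac : HasDerivAt (fun x : ℝ => w * b / (x + b * (1 - x)) ^ 2)
        ((0 * (β + b * (1 - β)) ^ 2 - w * b * (2 * (β + b * (1 - β)) ^ 1 * (1 - b)))
          / ((β + b * (1 - β)) ^ 2) ^ 2) β :=
      (hasDerivAt_const β (w * b)).div hpow hne2
    have h1 : HasDerivAt G1
        (((αF - αR) * ((w * (β + b * (1 - β)) - w * β * (1 - b)) / (β + b * (1 - β)) ^ 2))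
          + (1 * (αF - αR) * (w * b / (β + b * (1 - β)) ^ 2)
            + (β * (αF - αR) + αR) *
              ((0 * (β + b * (1 - β)) ^ 2 - w * b * (2 * (β + b * (1 - β)) ^ 1 * (1 - b)))
                / ((β + b * (1 - β)) ^ 2) ^ 2))) β := by
      exact (((hH β hne).const_mul (αF - αR)).sub_const 1).add
        ((((hasDerivAt_id β).mul_const (αF - αR)).add_const αR).mul hfrac)
    refine h1.congr_deriv ?_
    field_simp
    ring
  -- positivity of denominator on Icc
  have hpos : ∀ β : ℝ, β ∈ Set.Icc (0:ℝ) 1 → 0 < β + b * (1 - β) := by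
    intro β hβ
    rcases hβ with ⟨h0, h1⟩
    rcases eq_or_lt_of_le h0 with h | h
    · simp [← h]; linarith
    · nlinarith
  -- the open set where denominator is nonzero
  have hUopen : IsOpen {x : ℝ | x + b * (1 - x) ≠ 0} := by
    have : Continuous fun x : ℝ => x + b * (1 - x) := by continuity
    exact isOpen_ne_fun this continuous_const
  have hderivg_eq : ∀ β : ℝ, β + b * (1 - β) ≠ 0 → deriv (deriv g) β
      = 2 * w * b / (β + b * (1 - β)) ^ 3 * (b * αF - αR) := by
    intro β hne
    have hev : deriv g =ᶠ[nhds β] G1 := by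
      filter_upwards [hUopen.mem_nhds hne] with x hx
      exact (hderiv1 x hx).deriv
    rw [hev.deriv_eq]
    exact (hderiv2 β hne).deriv
  have hmain : ∀ β ∈ Set.Icc (0:ℝ) 1,
      deriv (deriv g) β = 2 * w * b / (β + b * (1 - β)) ^ 3 * (b * αF - αR) := by
    intro β hβ
    exact hderivg_eq β (hpos β hβ).ne'
  -- continuity of g on Icc
  have hcont : ContinuousOn g (Set.Icc (0:ℝ) 1) := by
    intro x hx
    exact ((hderiv1 x (hpos x hx).ne').differentiableAt.continuousAt).continuousWithinAt
  refine ⟨hmain, ?_, ?_, ?_⟩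
  · intro hlt
    refine strictConvexOn_of_deriv2_pos (convex_Icc 0 1) hcont ?_
    intro x hx
    rw [interior_Icc] at hx
    have hx' : x ∈ Set.Icc (0:ℝ) 1 := Set.mem_Icc.2 ⟨hx.1.le, hx.2.le⟩
    have := hmain x hx'
    simp only [Function.iterate_succ, Function.iterate_zero, Function.comp_apply, id_eq]
    rw [this]
    have hDpos := hpos x hx'
    have : (0:ℝ) < 2 * w * b / (x + b * (1 - x)) ^ 3 := by positivity
    nlinarith
  · intro hlt
    refine strictConcaveOn_of_deriv2_neg (convex_Icc 0 1) hcont ?_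
    intro x hx
    rw [interior_Icc] at hx
    have hx' : x ∈ Set.Icc (0:ℝ) 1 := Set.mem_Icc.2 ⟨hx.1.le, hx.2.le⟩
    have := hmain x hx'
    simp only [Function.iterate_succ, Function.iterate_zero, Function.comp_apply, id_eq]
    rw [this]
    have hDpos := hpos x hx'
    have h2 : (0:ℝ) < 2 * w * b / (x + b * (1 - x)) ^ 3 := by positivity
    nlinarith
  · intro heq
    subst heq
    refine ⟨αF * w + ε * αF - ε * (b * αF) - 1, ε * (b * αF), ?_⟩
    intro β hβ
    have hne := (hpos β hβ).ne'
    rw [hgfun]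
    field_simp
    ring
end

section
/- With notation as in the reluctance model, define $g_c(\beta) = (\beta(q_F(\beta) - q_R(\beta)) + q_R(\beta))(\eta_c + \beta(1-\eta_c)) - \beta$ where $q_i(\beta) = \alpha_i(w\beta/(\beta + b(1-\beta)) + \epsilon)$, $0 < \eta_c < 1$, $\alpha_F > \alpha_R > 0$, $w, b, \epsilon > 0$. If $b\alpha_F \ge \alpha_R$, then $g_c''(\beta) > 0$ for all $\beta \in [0,1)$, i.e., $g_c$ is strictly convex on $[0,1)$. -/
/-!
Write `D β = β + b(1-β)`, positive on `[0,1)`, and `g_c = A·S·E - β` with `A β = (α_F-α_R)β + α_R`,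
`E β = η_c + β(1-η_c)` affine and `S β = wβ/D β + ε`, so that `S' = wb/D²` and `S'' = -2wb(1-b)/D³`.
In `(A·S·E)'' = 2A'E'S + 2(AE)'S' + AES''` the last two terms combine to
`2wb/D³ · ((bα_F - α_R)E + (1-η_c)A·D)`, because `A'·D - A·(1-b) = bα_F - α_R`.
Under `bα_F ≥ α_R` every term is nonnegative and the first one is positive.
-/

open Set Filter Topology

namespace Reluctance

variable (αF αR w b ε ηc : ℝ)

lemma hasDerivAt_affine (a c x : ℝ) : HasDerivAt (fun y => a * y + c) a x := by
  simpa using ((hasDerivAt_id' x).const_mul a).add_const c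

lemma hasDerivAt_denom (x : ℝ) : HasDerivAt (fun y => y + b * (1 - y)) (1 - b) x :=
  ((hasDerivAt_id' x).add (((hasDerivAt_id' x).const_sub 1).const_mul b)).congr_deriv (by ring)

lemma denom_pos {b x : ℝ} (hb : 0 < b) (hx : x ∈ Ico (0 : ℝ) 1) : 0 < x + b * (1 - x) := by
  nlinarith [hx.1, hx.2]

lemma hasDerivAt_saturation {x : ℝ} (hx : x + b * (1 - x) ≠ 0) :
    HasDerivAt (fun y => w * y / (y + b * (1 - y)) + ε) (w * b / (x + b * (1 - x)) ^ 2) x := by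
  refine ((((hasDerivAt_id' x).const_mul w).div (hasDerivAt_denom b x) hx).add_const ε).congr_deriv ?_
  field_simp
  ring

lemma hasDerivAt_saturation_deriv {x : ℝ} (hx : x + b * (1 - x) ≠ 0) :
    HasDerivAt (fun y => w * b / (y + b * (1 - y)) ^ 2)
      (-2 * w * b * (1 - b) / (x + b * (1 - x)) ^ 3) x := by
  refine ((hasDerivAt_const x (w * b)).div ((hasDerivAt_denom b x).fun_pow 2)
    (pow_ne_zero 2 hx)).congr_deriv ?_
  simp only [Nat.cast_ofNat, zero_mul, zero_sub, Nat.add_one_sub_one, pow_one]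
  field_simp

noncomputable def gc (x : ℝ) : ℝ :=
  ((αF - αR) * x + αR) * (w * x / (x + b * (1 - x)) + ε) * ((1 - ηc) * x + ηc) - x

noncomputable def gcDeriv (x : ℝ) : ℝ :=
  ((αF - αR) * (w * x / (x + b * (1 - x)) + ε)
      + ((αF - αR) * x + αR) * (w * b / (x + b * (1 - x)) ^ 2)) * ((1 - ηc) * x + ηc)
    + ((αF - αR) * x + αR) * (w * x / (x + b * (1 - x)) + ε) * (1 - ηc) - 1

noncomputable def gcDeriv2 (x : ℝ) : ℝ :=
  2 * (1 - ηc) * (αF - αR) * (w * x / (x + b * (1 - x)) + ε)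
    + 2 * w * b / (x + b * (1 - x)) ^ 3
      * ((b * αF - αR) * (ηc * (1 - x) + x)
        + (1 - ηc) * (x * (αF - αR) + αR) * (x + (1 - x) * b))

lemma hasDerivAt_gc {x : ℝ} (hx : x + b * (1 - x) ≠ 0) :
    HasDerivAt (gc αF αR w b ε ηc) (gcDeriv αF αR w b ε ηc x) x := by
  have hA := hasDerivAt_affine (αF - αR) αR x
  have hE := hasDerivAt_affine (1 - ηc) ηc x
  exact ((hA.mul (hasDerivAt_saturation w b ε hx)).mul hE).sub (hasDerivAt_id x)

lemma hasDerivAt_gcDeriv {x : ℝ} (hx : x + b * (1 - x) ≠ 0) :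
    HasDerivAt (gcDeriv αF αR w b ε ηc) (gcDeriv2 αF αR w b ε ηc x) x := by
  have hA := hasDerivAt_affine (αF - αR) αR x
  have hE := hasDerivAt_affine (1 - ηc) ηc x
  have hS := hasDerivAt_saturation w b ε hx
  have hS' := hasDerivAt_saturation_deriv w b hx
  have h := ((((hS.const_mul (αF - αR)).add (hA.mul hS')).mul hE).add
    ((hA.mul hS).mul_const (1 - ηc))).sub_const 1
  refine h.congr_deriv ?_
  simp only [gcDeriv2, Pi.add_apply, Pi.mul_apply]
  field_simp
  ring

lemma deriv_deriv_gc {x : ℝ} (hx : x + b * (1 - x) ≠ 0) :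
    deriv (deriv (gc αF αR w b ε ηc)) x = gcDeriv2 αF αR w b ε ηc x := by
  have hnear : deriv (gc αF αR w b ε ηc) =ᶠ[𝓝 x] gcDeriv αF αR w b ε ηc :=
    (hasDerivAt_denom b x).continuousAt.eventually_ne hx |>.mono
      fun y hy => (hasDerivAt_gc αF αR w b ε ηc hy).deriv
  rw [hnear.deriv_eq, (hasDerivAt_gcDeriv αF αR w b ε ηc hx).deriv]

variable {αF αR w b ε ηc} in
lemma gcDeriv2_pos (hα : αF > αR) (hαR : 0 < αR) (hw : 0 < w) (hb : 0 < b) (hε : 0 < ε)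
    (hηc : ηc ∈ Ioo (0 : ℝ) 1) (hbα : b * αF ≥ αR) {x : ℝ} (hx : x ∈ Ico (0 : ℝ) 1) :
    0 < gcDeriv2 αF αR w b ε ηc x := by
  obtain ⟨hη0, hη1⟩ := hηc
  obtain ⟨hx0, hx1⟩ := hx
  have hD := denom_pos hb ⟨hx0, hx1⟩
  have hS : 0 < w * x / (x + b * (1 - x)) + ε := by positivity
  have hA : 0 < x * (αF - αR) + αR := by nlinarith
  have hcurv : 0 < (b * αF - αR) * (ηc * (1 - x) + x)
      + (1 - ηc) * (x * (αF - αR) + αR) * (x + (1 - x) * b) :=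
    add_pos_of_nonneg_of_pos (mul_nonneg (by linarith) (by nlinarith))
      (mul_pos (mul_pos (by linarith) hA) (by linarith))
  have hfirst : 0 < 2 * (1 - ηc) * (αF - αR) * (w * x / (x + b * (1 - x)) + ε) :=
    mul_pos (mul_pos (mul_pos two_pos (by linarith)) (by linarith)) hS
  have hsecond : 0 < 2 * w * b / (x + b * (1 - x)) ^ 3 * _ :=
    mul_pos (div_pos (by positivity) (pow_pos hD 3)) hcurv
  unfold gcDeriv2
  linarith

end Reluctance

open Reluctance in
theorem stmt_8 (αF αR w b ε ηc : ℝ)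
    (hα : αF > αR) (hαR : 0 < αR) (hw : 0 < w) (hb : 0 < b) (hε : 0 < ε)
    (hηc : ηc ∈ Set.Ioo (0:ℝ) 1)
    (hbα : b * αF ≥ αR)
    (qF qR gc : ℝ → ℝ)
    (hqF : ∀ β, qF β = αF * (w * β / (β + b * (1 - β)) + ε))
    (hqR : ∀ β, qR β = αR * (w * β / (β + b * (1 - β)) + ε))
    (hgc : ∀ β, gc β = (β * (qF β - qR β) + qR β) * (ηc + β * (1 - ηc)) - β) :
    (∀ β ∈ Set.Ico (0:ℝ) 1, 0 < deriv (deriv gc) β)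
    ∧ StrictConvexOn ℝ (Set.Ico (0:ℝ) 1) gc := by
  have hgc_eq : gc = Reluctance.gc αF αR w b ε ηc := by
    funext x
    rw [hgc, hqF, hqR, Reluctance.gc]
    ring
  subst hgc_eq
  have hD {x : ℝ} (hx : x ∈ Ico (0 : ℝ) 1) := (denom_pos hb hx).ne'
  have hpos : ∀ β ∈ Ico (0 : ℝ) 1, 0 < deriv (deriv (Reluctance.gc αF αR w b ε ηc)) β :=
    fun β hβ => deriv_deriv_gc αF αR w b ε ηc (hD hβ) ▸ gcDeriv2_pos hα hαR hw hb hε hηc hbα hβ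
  refine ⟨hpos, strictConvexOn_of_deriv2_pos (convex_Ico 0 1) ?_ ?_⟩
  · exact fun x hx => (hasDerivAt_gc αF αR w b ε ηc (hD hx)).continuousAt.continuousWithinAt
  · rw [interior_Ico]
    intro x hx
    simpa using hpos x (Ioo_subset_Ico_self hx)
end

section
/- Let $g : [0,1] \to \mathbb{R}$ be twice continuously differentiable with $g(0) > 0$, $g(1) < 0$, and suppose $g'$ is convex on $[0,1]$. Then $g$ has a unique zero in $(0,1)$. -/
/-! Two zeros `a < b` of `g` in `(0, 1)` would give, by the mean value theorem, points
`c₁ < a < c₂ < b < c₃` with `g' c₁ < 0` (as `g 0 > 0 = g a`), `g' c₂ = 0` (Rolle) and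
`g' c₃ < 0` (as `g b = 0 > g 1`). A convex function is bounded on a segment by the larger
of its endpoint values, so `g' c₂ < 0`, a contradiction. -/

open Set

theorem ConvexOn.lt_of_mem_Icc {s : Set ℝ} {f : ℝ → ℝ} {x y z c : ℝ} (hf : ConvexOn ℝ s f)
    (hx : x ∈ s) (hy : y ∈ s) (hz : z ∈ Icc x y) (hfx : f x < c) (hfy : f y < c) : f z < c :=
  (hf.le_on_segment hx hy (by rwa [segment_eq_Icc (hz.1.trans hz.2)])).trans_lt
    (max_lt hfx hfy)

theorem exists_deriv_neg_of_lt {f : ℝ → ℝ} {a b : ℝ} (hab : a < b)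
    (hfc : ContinuousOn f (Icc a b)) (hfd : DifferentiableOn ℝ f (Ioo a b)) (h : f b < f a) :
    ∃ c ∈ Ioo a b, deriv f c < 0 := by
  obtain ⟨c, hc, hslope⟩ := exists_deriv_eq_slope f hab hfc hfd
  exact ⟨c, hc, hslope ▸ div_neg_of_neg_of_pos (sub_neg.2 h) (sub_pos.2 hab)⟩

theorem subsingleton_zeros_of_convexOn_deriv {g : ℝ → ℝ} {p q : ℝ}
    (hgc : ContinuousOn g (Icc p q)) (hgd : DifferentiableOn ℝ g (Ioo p q))
    (hconv : ConvexOn ℝ (Icc p q) (deriv g)) (hp : 0 < g p) (hq : g q < 0) :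
    {x ∈ Ioo p q | g x = 0}.Subsingleton := by
  suffices ∀ a b, a ∈ Ioo p q → b ∈ Ioo p q → g a = 0 → g b = 0 → ¬ a < b by
    intro a ⟨ha, hga⟩ b ⟨hb, hgb⟩
    exact le_antisymm (not_lt.1 (this b a hb ha hgb hga)) (not_lt.1 (this a b ha hb hga hgb))
  intro a b ha hb hga hgb hab
  obtain ⟨c₁, hc₁, hneg₁⟩ := exists_deriv_neg_of_lt ha.1
    (hgc.mono (Icc_subset_Icc_right ha.2.le))
    (hgd.mono (Ioo_subset_Ioo_right ha.2.le)) (hga ▸ hp)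
  obtain ⟨c₂, hc₂, hzero₂⟩ := exists_deriv_eq_zero hab
    (hgc.mono (Icc_subset_Icc ha.1.le hb.2.le)) (hga.trans hgb.symm)
  obtain ⟨c₃, hc₃, hneg₃⟩ := exists_deriv_neg_of_lt hb.2
    (hgc.mono (Icc_subset_Icc_left hb.1.le))
    (hgd.mono (Ioo_subset_Ioo_left hb.1.le)) (hgb ▸ hq)
  have hneg₂ : deriv g c₂ < 0 :=
    hconv.lt_of_mem_Icc ⟨hc₁.1.le, by linarith [hc₁.2, ha.2]⟩
      ⟨by linarith [hc₃.1, hb.1], hc₃.2.le⟩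
      ⟨by linarith [hc₁.2, hc₂.1], by linarith [hc₂.2, hc₃.1]⟩ hneg₁ hneg₃
  exact hneg₂.ne hzero₂

theorem stmt_10 (g : ℝ → ℝ) (hg : ContDiff ℝ 2 g)
    (hconv : ConvexOn ℝ (Set.Icc (0:ℝ) 1) (deriv g))
    (h0 : 0 < g 0) (h1 : g 1 < 0) :
    ∃! β : ℝ, β ∈ Set.Ioo (0:ℝ) 1 ∧ g β = 0 := by
  have hgc : ContinuousOn g (Icc 0 1) := hg.continuous.continuousOn
  obtain ⟨β, hβ, hgβ⟩ : (0:ℝ) ∈ g '' Ioo 0 1 :=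
    intermediate_value_Ioo' zero_le_one hgc ⟨h1, h0⟩
  have hunique := subsingleton_zeros_of_convexOn_deriv hgc
    (hg.differentiable (by norm_num)).differentiableOn hconv h0 h1
  exact ⟨β, ⟨hβ, hgβ⟩, fun y hy => hunique hy ⟨hβ, hgβ⟩⟩
end

section
/- Let $\beta^*(w)$ denote the unique solution in $(0,1)$ of $\beta = \beta q_F(\beta; w) + (1-\beta) q_R(\beta; w)$ where $q_i(\beta; w) = \alpha_i(w\beta/(\beta+b(1-\beta)) + \epsilon)$, under $\alpha_F > \alpha_R > 0$, $b, \epsilon > 0$, $\max\{\alpha_F,\alpha_R\}(w+\epsilon) < 1$. Then $w \mapsto \beta^*(w)$ is (weakly) monotone increasing: if $w_1 > w_2$ then $\beta^*(w_1) \ge \beta^*(w_2)$. -/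
/-- A quadratic that is positive at 0, vanishes at `x1`, is positive at `x2 > x1`,
and is negative at `1 > x2` gives a contradiction. -/
lemma quad_aux (a b c x1 x2 : ℝ) (h0 : 0 < x1) (h12 : x1 < x2) (h21 : x2 < 1)
    (hq1 : a * x1 ^ 2 + b * x1 + c = 0) (hq2 : 0 < a * x2 ^ 2 + b * x2 + c)
    (hc : 0 < c) (h1 : a + b + c < 0) : False := by
  -- secant slopes
  have s1 : a * x1 + b < 0 := by nlinarith
  have s2 : a * (x1 + x2) + b > 0 := by nlinarith [mul_pos (sub_pos.2 h12) (sub_pos.2 h12)]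
  have s3 : a * (x2 + 1) + b < 0 := by nlinarith
  have ha1 : a * x2 > 0 := by nlinarith
  have ha2 : a * (1 - x1) < 0 := by nlinarith
  nlinarith

theorem stmt_16 (αF αR b ε w1 w2 : ℝ)
    (hα : αF > αR) (hαR : 0 < αR) (hb : 0 < b) (hε : 0 < ε)
    (hw2 : 0 < w2) (hw12 : w2 < w1)
    (hmax1 : max αF αR * (w1 + ε) < 1) (hmax2 : max αF αR * (w2 + ε) < 1)
    (β1 β2 : ℝ) (hβ1 : β1 ∈ Set.Ioo (0:ℝ) 1) (hβ2 : β2 ∈ Set.Ioo (0:ℝ) 1)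
    (hfix1 : β1 = β1 * (αF * (w1 * β1 / (β1 + b * (1 - β1)) + ε))
      + (1 - β1) * (αR * (w1 * β1 / (β1 + b * (1 - β1)) + ε)))
    (hfix2 : β2 = β2 * (αF * (w2 * β2 / (β2 + b * (1 - β2)) + ε))
      + (1 - β2) * (αR * (w2 * β2 / (β2 + b * (1 - β2)) + ε))) :
    β2 ≤ β1 := by
  obtain ⟨hβ1l, hβ1r⟩ := hβ1
  obtain ⟨hβ2l, hβ2r⟩ := hβ2
  have hmaxF : max αF αR = αF := max_eq_left hα.le
  rw [hmaxF] at hmax1 hmax2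
  have hD1 : (0:ℝ) < β1 + b * (1 - β1) := by nlinarith
  have hD2 : (0:ℝ) < β2 + b * (1 - β2) := by nlinarith
  by_contra hcon
  push_neg at hcon
  -- H w β := (β*αF+(1-β)*αR)*(w*β) + ((β*αF+(1-β)*αR)*ε - β)*(β + b*(1-β))
  set a : ℝ := (1 - b) * ((αF - αR) * ε - 1) + w1 * (αF - αR) with ha
  set bb : ℝ := αR * ε * (1 - b) + b * ((αF - αR) * ε - 1) + w1 * αR with hbb
  set c : ℝ := αR * ε * b with hc
  have h1 : a * β1 ^ 2 + bb * β1 + c = 0 := by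
    have := hfix1
    field_simp at this
    rw [ha, hbb, hc]; linear_combination -this
  have h2' : a * β2 ^ 2 + bb * β2 + c
      = (β2 * αF + (1 - β2) * αR) * β2 * (w1 - w2) := by
    have := hfix2
    field_simp at this
    rw [ha, hbb, hc]; linear_combination -this
  have h2 : 0 < a * β2 ^ 2 + bb * β2 + c := by
    rw [h2']
    apply mul_pos (mul_pos _ hβ2l) (sub_pos.2 hw12)
    nlinarith
  have hcp : 0 < c := by rw [hc]; positivity
  have h1' : a + bb + c < 0 := by
    rw [ha, hbb, hc]; nlinarith
  exact quad_aux a bb c β1 β2 hβ1l hcon hβ2r h1 h2 hcp h1'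
end

section
/- In the reluctance model with $g_c(\beta) = (\beta(q_F(\beta) - q_R(\beta)) + q_R(\beta))(\eta_c + \beta(1-\eta_c)) - \beta$, suppose $g_c(0) > 0$, $g_c(1) < 0$, and $g_c'$ is a convex function on $[0,1]$ that attains negative values. Then the set $D = \{\beta \in [0,1] : g_c'(\beta) \le 0\}$ is a closed interval $[\tilde{\beta}_1, \tilde{\beta}_2]$, $g_c$ has a unique zero $\beta^*$, and $\beta^* \in D$; moreover $g_c > 0$ on $[0, \beta^*)$ and $g_c < 0$ on $(\beta^*, 1]$. -/
/-!
Since `g'` is convex, `{g' ≤ 0}` is a compact interval `[b₁, b₂]` on which `g' < 0` away from the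
endpoints, while `g' > 0` off it. So `g` increases on `[0, b₁]`, strictly decreases on `[b₁, b₂]`
and increases on `[b₂, 1]`: it stays above `g 0 > 0` on the first piece and below `g 1 < 0` on the
last, so its only sign change is the zero that the intermediate value theorem gives in `(b₁, b₂)`.
-/

open Set

theorem ConvexOn.neg_of_mem_openSegment {E : Type*} [AddCommGroup E] [Module ℝ E] {s : Set E}
    {f : E → ℝ} (hf : ConvexOn ℝ s f) {x y z : E} (hx : x ∈ s) (hy : y ∈ s)
    (hz : z ∈ openSegment ℝ x y) (hfx : f x < 0) (hfy : f y ≤ 0) : f z < 0 := by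
  obtain ⟨a, b, ha, hb, hab, rfl⟩ := hz
  have hle := hf.2 hx hy ha.le hb.le hab
  simp only [smul_eq_mul] at hle
  linarith [mul_neg_of_pos_of_neg ha hfx, mul_nonpos_of_nonneg_of_nonpos hb.le hfy]

theorem ConvexOn.neg_on_Ioo {s : Set ℝ} {f : ℝ → ℝ} (hf : ConvexOn ℝ s f) {c d x₀ : ℝ}
    (hc : c ∈ s) (hd : d ∈ s) (hfc : f c ≤ 0) (hfd : f d ≤ 0) (hx₀ : x₀ ∈ Icc c d)
    (hfx₀ : f x₀ < 0) : ∀ x ∈ Ioo c d, f x < 0 := by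
  have hx₀s : x₀ ∈ s := hf.1.ordConnected.out hc hd hx₀
  intro x hx
  rcases lt_trichotomy x₀ x with hlt | rfl | hgt
  · refine hf.neg_of_mem_openSegment hx₀s hd ?_ hfx₀ hfd
    rw [openSegment_eq_Ioo (hlt.trans hx.2)]
    exact ⟨hlt, hx.2⟩
  · exact hfx₀
  · refine hf.neg_of_mem_openSegment hx₀s hc ?_ hfx₀ hfc
    rw [openSegment_symm, openSegment_eq_Ioo (hx.1.trans hgt)]
    exact ⟨hx.1, hgt⟩

theorem ConvexOn.exists_Icc_eq_setOf_nonpos {s : Set ℝ} {f : ℝ → ℝ} (hf : ConvexOn ℝ s f)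
    (hcont : ContinuousOn f s) (hs : IsCompact s) (hne : ∃ x ∈ s, f x ≤ 0) :
    ∃ c d, c ≤ d ∧ {x ∈ s | f x ≤ 0} = Icc c d := by
  set D := {x ∈ s | f x ≤ 0}
  have hDne : D.Nonempty := hne
  have hDcompact : IsCompact D :=
    hs.of_isClosed_subset (hcont.preimage_isClosed_of_isClosed hs.isClosed isClosed_Iic)
      fun _ hx => hx.1
  have hDeq := eq_Icc_of_connected_compact ⟨hDne, (hf.convex_le 0).isPreconnected⟩ hDcompact
  obtain ⟨x, hx⟩ := hDne
  rw [hDeq] at hx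
  exact ⟨_, _, hx.1.trans hx.2, hDeq⟩

theorem exists_sign_change_of_up_down_up {g : ℝ → ℝ} {a b c d : ℝ}
    (hg : ContinuousOn g (Icc a d)) (hab : a ≤ b) (hbc : b ≤ c) (hcd : c ≤ d)
    (hup₁ : MonotoneOn g (Icc a b)) (hdown : StrictAntiOn g (Icc b c))
    (hup₂ : MonotoneOn g (Icc c d)) (ha : 0 < g a) (hd : g d < 0) :
    ∃ z ∈ Ioo b c, g z = 0 ∧ (∀ x ∈ Icc a d, x < z → 0 < g x)
      ∧ (∀ x ∈ Icc a d, z < x → g x < 0) := by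
  have hpos : ∀ x ∈ Icc a b, 0 < g x := fun x hx =>
    ha.trans_le (hup₁ ⟨le_rfl, hab⟩ hx hx.1)
  have hneg : ∀ x ∈ Icc c d, g x < 0 := fun x hx =>
    (hup₂ hx ⟨hcd, le_rfl⟩ hx.2).trans_lt hd
  obtain ⟨z, hz, hgz⟩ := intermediate_value_Ioo' hbc
    (hg.mono (Icc_subset_Icc hab hcd)) ⟨hneg c ⟨le_rfl, hcd⟩, hpos b ⟨hab, le_rfl⟩⟩
  refine ⟨z, hz, hgz, fun x hx hxz => ?_, fun x hx hzx => ?_⟩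
  · rcases le_or_gt x b with hxb | hbx
    · exact hpos x ⟨hx.1, hxb⟩
    · exact hgz ▸ hdown ⟨hbx.le, hxz.le.trans hz.2.le⟩ ⟨hz.1.le, hz.2.le⟩ hxz
  · rcases le_or_gt c x with hcx | hxc
    · exact hneg x ⟨hcx, hx.2⟩
    · exact hgz ▸ hdown ⟨hz.1.le, hz.2.le⟩ ⟨hz.1.le.trans hzx.le, hxc.le⟩ hzx

theorem stmt_18 (gc : ℝ → ℝ) (hgc : ContDiff ℝ 1 gc)
    (hconv : ConvexOn ℝ (Set.Icc (0:ℝ) 1) (deriv gc))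
    (hneg : ∃ β ∈ Set.Icc (0:ℝ) 1, deriv gc β < 0)
    (h0 : 0 < gc 0) (h1 : gc 1 < 0) :
    (∃ b1 b2 : ℝ, b1 ∈ Set.Icc (0:ℝ) 1 ∧ b2 ∈ Set.Icc (0:ℝ) 1 ∧ b1 ≤ b2
      ∧ {β : ℝ | β ∈ Set.Icc (0:ℝ) 1 ∧ deriv gc β ≤ 0} = Set.Icc b1 b2)
    ∧ ∃ βs ∈ Set.Ioo (0:ℝ) 1, gc βs = 0 ∧ deriv gc βs ≤ 0
      ∧ (∀ β ∈ Set.Icc (0:ℝ) 1, β < βs → 0 < gc β)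
      ∧ (∀ β ∈ Set.Icc (0:ℝ) 1, βs < β → gc β < 0)
      ∧ (∀ β' ∈ Set.Icc (0:ℝ) 1, gc β' = 0 → β' = βs) := by
  
  obtain ⟨β₀, hβ₀, hgβ₀⟩ := hneg
  obtain ⟨b₁, b₂, hb, hD⟩ := hconv.exists_Icc_eq_setOf_nonpos
    (hgc.continuous_deriv le_rfl).continuousOn isCompact_Icc ⟨β₀, hβ₀, hgβ₀.le⟩
  have hmem (x : ℝ) : x ∈ Icc 0 1 ∧ deriv gc x ≤ 0 ↔ x ∈ Icc b₁ b₂ := Set.ext_iff.1 hD x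
  have hb₁ := (hmem b₁).2 ⟨le_rfl, hb⟩
  have hb₂ := (hmem b₂).2 ⟨hb, le_rfl⟩
  have hpos_out : ∀ x ∈ Icc 0 1, x ∉ Icc b₁ b₂ → 0 < deriv gc x := fun x hx hxD =>
    not_le.1 fun hgx => hxD ((hmem x).1 ⟨hx, hgx⟩)
  have hneg_in := hconv.neg_on_Ioo hb₁.1 hb₂.1 hb₁.2 hb₂.2 ((hmem β₀).1 ⟨hβ₀, hgβ₀.le⟩) hgβ₀
  have hcont (s : Set ℝ) : ContinuousOn gc s := hgc.continuous.continuousOn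
  have hup₁ : StrictMonoOn gc (Icc 0 b₁) := strictMonoOn_of_deriv_pos (convex_Icc _ _) (hcont _)
    (by simpa only [interior_Icc] using fun x hx =>
      hpos_out x ⟨hx.1.le, hx.2.le.trans hb₁.1.2⟩ fun h => hx.2.not_ge h.1)
  have hdown : StrictAntiOn gc (Icc b₁ b₂) := strictAntiOn_of_deriv_neg (convex_Icc _ _)
    (hcont _) (by simpa only [interior_Icc] using hneg_in)
  have hup₂ : StrictMonoOn gc (Icc b₂ 1) := strictMonoOn_of_deriv_pos (convex_Icc _ _) (hcont _)
    (by simpa only [interior_Icc] using fun x hx =>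
      hpos_out x ⟨hb₂.1.1.trans hx.1.le, hx.2.le⟩ fun h => hx.1.not_ge h.2)
  obtain ⟨z, hz, hgz, hleft, hright⟩ := exists_sign_change_of_up_down_up
    (hcont _) hb₁.1.1 hb hb₂.1.2 hup₁.monotoneOn hdown hup₂.monotoneOn h0 h1
  refine ⟨⟨b₁, b₂, hb₁.1, hb₂.1, hb, hD⟩, z, ⟨hb₁.1.1.trans_lt hz.1, hz.2.trans_le hb₂.1.2⟩,
    hgz, (hneg_in z hz).le, hleft, hright, fun x hx hgx => ?_⟩
  rcases lt_trichotomy x z with h | rfl | h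
  · exact absurd hgx (hleft x hx h).ne'
  · rfl
  · exact absurd hgx (hright x hx h).ne
end
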